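/- arXiv:2601.21892 — 2 statements merged into one kernel-verified Lean document; each statement's English description precedes it below -/
import Mathlib

section
/- Let d ≥ 1, let μ be a compactly supported probability measure on ℝ^d, and let t ∈ (0,1). For every x ∈ ℝ^d the Gaussian weight integral ∫ exp(-‖x - t x₁‖²/(2(1-t)²)) dμ(x₁) is strictly positive, and the ideal velocity field v*_t(x) := (m_t(x) - x)/(1-t) is well defined, where m_t(x) := (∫ x₁ exp(-‖x - t x₁‖²/(2(1-t)²)) dμ(x₁)) / (∫ exp(-‖x - t x₁‖²/(2(1-t)²)) dμ(x₁)). If v* is continuous on (0,1) × ℝ^d and L_μ(v*) < ∞, then for every continuous f : (0,1) × ℝ^d → ℝ^d one has L_μ(f) ≥ L_μ(v*); that is, v* is a global minimizer of the flow-matching loss over the space of continuous velocity fields. -/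
open MeasureTheory Real Set
open scoped ENNReal

/-- The topological support of a measure: points all of whose neighborhoods have
positive measure. -/
def mSupport {α : Type*} [TopologicalSpace α] [MeasurableSpace α]
    (μ : Measure α) : Set α :=
  {x | ∀ U ∈ nhds x, 0 < μ U}

/-- The standard Gaussian measure `N(0, I_d)` on `ℝ^d`, given by its density
with respect to Lebesgue measure. -/
noncomputable def stdGaussian (d : ℕ) : Measure (EuclideanSpace ℝ (Fin d)) :=
  volume.withDensity fun x =>
    ENNReal.ofReal ((2 * π) ^ (-(d : ℝ) / 2) * Real.exp (-‖x‖ ^ 2 / 2))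

/-- The flow-matching loss
`L_μ(f) = ∫₀¹ E_{x₀ ~ N(0,I), x₁ ~ μ} ‖f(t, (1-t)x₀ + t x₁) - (x₁ - x₀)‖² dt`,
as a value in `[0,∞]`. -/
noncomputable def FMLoss {d : ℕ} (μ : Measure (EuclideanSpace ℝ (Fin d)))
    (f : ℝ → EuclideanSpace ℝ (Fin d) → EuclideanSpace ℝ (Fin d)) : ℝ≥0∞ :=
  ∫⁻ t in Ioo (0 : ℝ) 1,
    ∫⁻ p : EuclideanSpace ℝ (Fin d) × EuclideanSpace ℝ (Fin d),
      ENNReal.ofReal (‖f t ((1 - t) • p.1 + t • p.2) - (p.2 - p.1)‖ ^ 2)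
      ∂((stdGaussian d).prod μ)

/-- The Gaussian weight integral `∫ exp(-‖x - t x₁‖²/(2(1-t)²)) dμ(x₁)`. -/
noncomputable def gaussWeight {d : ℕ} (μ : Measure (EuclideanSpace ℝ (Fin d)))
    (t : ℝ) (x : EuclideanSpace ℝ (Fin d)) : ℝ :=
  ∫ x₁, Real.exp (-‖x - t • x₁‖ ^ 2 / (2 * (1 - t) ^ 2)) ∂μ

/-- The posterior mean
`m_t(x) = (∫ x₁ exp(-‖x - t x₁‖²/(2(1-t)²)) dμ(x₁)) / (∫ exp(-‖x - t x₁‖²/(2(1-t)²)) dμ(x₁))`. -/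
noncomputable def postMean {d : ℕ} (μ : Measure (EuclideanSpace ℝ (Fin d)))
    (t : ℝ) (x : EuclideanSpace ℝ (Fin d)) : EuclideanSpace ℝ (Fin d) :=
  (gaussWeight μ t x)⁻¹ •
    ∫ x₁, Real.exp (-‖x - t • x₁‖ ^ 2 / (2 * (1 - t) ^ 2)) • x₁ ∂μ

/-- The ideal velocity field `v*_t(x) = (m_t(x) - x)/(1 - t)`. -/
noncomputable def idealVel {d : ℕ} (μ : Measure (EuclideanSpace ℝ (Fin d)))
    (t : ℝ) (x : EuclideanSpace ℝ (Fin d)) : EuclideanSpace ℝ (Fin d) :=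
  (1 - t)⁻¹ • (postMean μ t x - x)

section Helpers

open scoped RealInnerProductSpace

variable {d : ℕ}

local notation "E" => EuclideanSpace ℝ (Fin d)

lemma mSupport_compl_null (μ : Measure E) : μ (mSupport μ)ᶜ = 0 := by
  refine measure_null_of_locally_null _ fun x hx => ?_
  simp only [mSupport, mem_compl_iff, mem_setOf_eq, not_forall] at hx
  obtain ⟨U, hU, hUpos⟩ := hx
  exact ⟨U, nhdsWithin_le_nhds hU, le_antisymm (not_lt.1 hUpos) zero_le⟩

lemma ae_mem_mSupport (μ : Measure E) : ∀ᵐ x ∂μ, x ∈ mSupport μ := by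
  rw [ae_iff]
  exact measure_mono_null (fun y hy => hy) (mSupport_compl_null μ)

lemma measurable_piecewise_zero {X : Type*} [TopologicalSpace X] [MeasurableSpace X]
    [OpensMeasurableSpace X] {s : Set X} [∀ j, Decidable (j ∈ s)] (hs : IsOpen s) {G : X → ℝ≥0∞}
    (hG : ContinuousOn G s) : Measurable (s.piecewise G 0) := by
  apply measurable_of_isOpen
  intro t ht
  obtain ⟨u, u_open, hu⟩ : ∃ u : Set X, IsOpen u ∧ G ⁻¹' t ∩ s = u ∩ s :=
    _root_.continuousOn_iff'.1 hG t ht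
  rw [Set.piecewise_preimage, Set.ite, hu]
  exact (u_open.measurableSet.inter hs.measurableSet).union
    ((measurable_const ht.measurableSet).diff hs.measurableSet)

lemma w_le_one {t : ℝ} (ht : t ∈ Ioo (0:ℝ) 1) (x x₁ : E) :
    rexp (-‖x - t • x₁‖ ^ 2 / (2 * (1 - t) ^ 2)) ≤ 1 := by
  have h1 : (0:ℝ) < 1 - t := by linarith [ht.2]
  apply Real.exp_le_one_iff.2
  apply div_nonpos_of_nonpos_of_nonneg
  · simpa using sq_nonneg ‖x - t • x₁‖
  · positivity

lemma w_integrable (μ : Measure E) [IsProbabilityMeasure μ] {t : ℝ} (ht : t ∈ Ioo (0:ℝ) 1)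
    (x : E) : Integrable (fun x₁ => rexp (-‖x - t • x₁‖ ^ 2 / (2 * (1 - t) ^ 2))) μ := by
  refine Integrable.mono' (integrable_const 1) ?_ ?_
  · apply Continuous.aestronglyMeasurable
    fun_prop
  · refine Filter.Eventually.of_forall fun x₁ => ?_
    rw [Real.norm_eq_abs, abs_of_pos (Real.exp_pos _)]
    exact w_le_one ht x x₁

lemma gaussWeight_pos (μ : Measure E) [IsProbabilityMeasure μ] {t : ℝ}
    (ht : t ∈ Ioo (0:ℝ) 1) (x : E) : 0 < gaussWeight μ t x :=
  integral_exp_pos (w_integrable μ ht x)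

lemma wx_integrable (μ : Measure E) [IsProbabilityMeasure μ] (hsupp : IsCompact (mSupport μ))
    {t : ℝ} (ht : t ∈ Ioo (0:ℝ) 1) (x : E) :
    Integrable (fun x₁ => rexp (-‖x - t • x₁‖ ^ 2 / (2 * (1 - t) ^ 2)) • x₁) μ := by
  obtain ⟨C, hC⟩ := hsupp.isBounded.subset_closedBall 0
  refine Integrable.mono' (integrable_const C) ?_ ?_
  · apply Continuous.aestronglyMeasurable
    fun_prop
  · filter_upwards [ae_mem_mSupport μ] with x₁ hx₁
    have hx₁C : ‖x₁‖ ≤ C := by simpa [Metric.mem_closedBall] using hC hx₁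
    rw [norm_smul, Real.norm_eq_abs, abs_of_pos (Real.exp_pos _)]
    calc rexp (-‖x - t • x₁‖ ^ 2 / (2 * (1 - t) ^ 2)) * ‖x₁‖ ≤ 1 * ‖x₁‖ := by
          apply mul_le_mul_of_nonneg_right (w_le_one ht x x₁) (norm_nonneg _)
      _ = ‖x₁‖ := one_mul _
      _ ≤ C := hx₁C

instance stdGaussian_sfinite : SFinite (stdGaussian d) := by
  unfold stdGaussian; infer_instance

lemma gdens_meas : Measurable fun x : E =>
    ENNReal.ofReal ((2 * π) ^ (-(d : ℝ) / 2) * Real.exp (-‖x‖ ^ 2 / 2)) := by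
  fun_prop

/-- density constant -/
noncomputable def cT (d : ℕ) (t : ℝ) : ℝ := (((1 - t) ^ d)⁻¹ * (2 * π) ^ (-(d : ℝ) / 2))

lemma cT_pos {t : ℝ} (ht : t ∈ Ioo (0:ℝ) 1) : 0 < cT d t := by
  have h1 : (0:ℝ) < 1 - t := by linarith [ht.2]
  have h2 : (0:ℝ) < 2 * π := by positivity
  unfold cT
  positivity

lemma map_T_eq (μ : Measure E) [IsProbabilityMeasure μ] {t : ℝ} (ht : t ∈ Ioo (0:ℝ) 1) :
    Measure.map (fun p : E × E => ((1 - t) • p.1 + t • p.2, p.2)) ((stdGaussian d).prod μ)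
      = (volume.prod μ).withDensity fun q =>
          ENNReal.ofReal (cT d t * rexp (-‖q.1 - t • q.2‖ ^ 2 / (2 * (1 - t) ^ 2))) := by
  have h1 : (0:ℝ) < 1 - t := by linarith [ht.2]
  set T : E × E → E × E := fun p => ((1 - t) • p.1 + t • p.2, p.2) with hTdef
  have hT : Measurable T := by
    apply Measurable.prodMk _ measurable_snd
    exact (measurable_fst.const_smul (1 - t)).add (measurable_snd.const_smul t)
  set ρ : E × E → ℝ≥0∞ := fun q =>
    ENNReal.ofReal (cT d t * rexp (-‖q.1 - t • q.2‖ ^ 2 / (2 * (1 - t) ^ 2))) with hρdef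
  have hρmeas : Measurable ρ := by
    apply ENNReal.measurable_ofReal.comp
    fun_prop
  refine Measure.ext fun s hs => ?_
  rw [Measure.map_apply hT hs]
  have lhs1 : ((stdGaussian d).prod μ) (T ⁻¹' s)
      = ∫⁻ p, s.indicator (fun _ => (1:ℝ≥0∞)) (T p) ∂((stdGaussian d).prod μ) := by
    rw [← lintegral_indicator_one (hT hs)]
    congr 1
  rw [lhs1]
  have hind : Measurable fun q : E × E => s.indicator (fun _ => (1:ℝ≥0∞)) q :=
    measurable_one.indicator hs
  have hm : Measurable fun p : E × E => s.indicator (fun _ => (1:ℝ≥0∞)) (T p) := hind.comp hT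
  rw [lintegral_prod_symm _ hm.aemeasurable]
  have inner_eq : ∀ x₁ : E,
      (∫⁻ x₀, s.indicator (fun _ => (1:ℝ≥0∞)) (T (x₀, x₁)) ∂(stdGaussian d))
        = ∫⁻ y, ρ (y, x₁) * s.indicator (fun _ => (1:ℝ≥0∞)) (y, x₁) ∂(volume : Measure E) := by
    intro x₁
    unfold stdGaussian
    have hm2 : Measurable fun x₀ : E => s.indicator (fun _ => (1:ℝ≥0∞)) (T (x₀, x₁)) :=
      hm.comp (measurable_id.prodMk measurable_const)
    rw [lintegral_withDensity_eq_lintegral_mul _ gdens_meas hm2]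
    set φ : E → E := fun x₀ => (1 - t) • x₀ + t • x₁ with hφdef
    have hφ : Measurable φ := by fun_prop
    set K : E → ℝ≥0∞ := fun y =>
      ENNReal.ofReal ((2 * π) ^ (-(d : ℝ) / 2) * rexp (-‖(1 - t)⁻¹ • (y - t • x₁)‖ ^ 2 / 2))
        * s.indicator (fun _ => (1:ℝ≥0∞)) (y, x₁) with hKdef
    have hK : Measurable K := by
      apply Measurable.mul
      · apply ENNReal.measurable_ofReal.comp
        fun_prop
      · exact hind.comp (measurable_id.prodMk measurable_const)
    have hcomp : ∀ x₀ : E,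
        (fun x => ENNReal.ofReal ((2 * π) ^ (-(d : ℝ) / 2) * rexp (-‖x‖ ^ 2 / 2))) x₀
          * s.indicator (fun _ => (1:ℝ≥0∞)) (T (x₀, x₁)) = K (φ x₀) := by
      intro x₀
      have : (1 - t)⁻¹ • (φ x₀ - t • x₁) = x₀ := by
        simp only [hφdef, add_sub_cancel_right, smul_smul,
          inv_mul_cancel₀ h1.ne', one_smul]
      simp only [hKdef, this, hTdef]
      rfl
    simp only [Pi.mul_apply]
    simp only [hcomp]
    have hmap : Measure.map φ (volume : Measure E)
        = (ENNReal.ofReal (((1 - t) ^ d)⁻¹)) • (volume : Measure E) := by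
      have hco : φ = (fun y => y + t • x₁) ∘ (fun x₀ : E => (1 - t) • x₀) := rfl
      rw [hco, ← Measure.map_map (measurable_add_const _) (measurable_const_smul _)]
      rw [Measure.map_addHaar_smul (volume : Measure E) h1.ne']
      rw [Measure.map_smul, map_add_right_eq_self]
      congr 1
      rw [finrank_euclideanSpace_fin, abs_of_pos (by positivity)]
    rw [← lintegral_map hK hφ, hmap, lintegral_smul_measure]
    rw [smul_eq_mul, ← lintegral_const_mul _ hK]
    congr 1
    ext y
    simp only [hKdef, hρdef, ← mul_assoc]
    congr 1
    rw [← ENNReal.ofReal_mul (by positivity)]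
    have hexp2 : rexp (-‖(1 - t)⁻¹ • (y - t • x₁)‖ ^ 2 / 2)
        = rexp (-‖y - t • x₁‖ ^ 2 / (2 * (1 - t) ^ 2)) := by
      congr 1
      have hne : (1:ℝ) - t ≠ 0 := h1.ne'
      rw [norm_smul, norm_inv, Real.norm_eq_abs, abs_of_pos h1, mul_pow]
      field_simp
    rw [hexp2]
    congr 1
    unfold cT
    ring
  simp only [inner_eq]
  rw [← lintegral_prod_symm (fun q : E × E => ρ q * s.indicator (fun _ => (1:ℝ≥0∞)) q) (hρmeas.mul hind).aemeasurable]
  rw [withDensity_apply _ hs, ← lintegral_indicator hs]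
  congr 1
  ext q
  by_cases hq : q ∈ s <;> simp [Set.indicator_apply, hq]

lemma transfer_integral (μ : Measure E) [IsProbabilityMeasure μ] {t : ℝ}
    (ht : t ∈ Ioo (0:ℝ) 1) {F : E × E → ℝ} (hF : Continuous F) :
    ∫ p : E × E, F ((1 - t) • p.1 + t • p.2, p.2) ∂((stdGaussian d).prod μ)
      = ∫ q : E × E, (cT d t * rexp (-‖q.1 - t • q.2‖ ^ 2 / (2 * (1 - t) ^ 2))) • F q
          ∂(volume.prod μ) := by
  have hT : Measurable (fun p : E × E => ((1 - t) • p.1 + t • p.2, p.2)) := by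
    apply Measurable.prodMk _ measurable_snd
    exact (measurable_fst.const_smul (1 - t)).add (measurable_snd.const_smul t)
  rw [← integral_map hT.aemeasurable hF.aestronglyMeasurable, map_T_eq μ ht]
  have hnn : Measurable fun q : E × E =>
      Real.toNNReal (cT d t * rexp (-‖q.1 - t • q.2‖ ^ 2 / (2 * (1 - t) ^ 2))) :=
    Measurable.real_toNNReal (by fun_prop)
  have hid : (fun q : E × E => ENNReal.ofReal
        (cT d t * rexp (-‖q.1 - t • q.2‖ ^ 2 / (2 * (1 - t) ^ 2))))
      = fun q : E × E => ((Real.toNNReal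
        (cT d t * rexp (-‖q.1 - t • q.2‖ ^ 2 / (2 * (1 - t) ^ 2)))) : ℝ≥0∞) := rfl
  rw [hid, integral_withDensity_eq_integral_smul hnn F]
  congr 1
  ext q
  rw [NNReal.smul_def, Real.coe_toNNReal _ (mul_nonneg (cT_pos ht).le (Real.exp_pos _).le)]

lemma transfer_integrable (μ : Measure E) [IsProbabilityMeasure μ] {t : ℝ}
    (ht : t ∈ Ioo (0:ℝ) 1) {F : E × E → ℝ} (hF : Continuous F) :
    Integrable (fun p : E × E => F ((1 - t) • p.1 + t • p.2, p.2)) ((stdGaussian d).prod μ) ↔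
      Integrable (fun q : E × E =>
        (cT d t * rexp (-‖q.1 - t • q.2‖ ^ 2 / (2 * (1 - t) ^ 2))) • F q) (volume.prod μ) := by
  have hT : Measurable (fun p : E × E => ((1 - t) • p.1 + t • p.2, p.2)) := by
    apply Measurable.prodMk _ measurable_snd
    exact (measurable_fst.const_smul (1 - t)).add (measurable_snd.const_smul t)
  have h3 := integrable_map_measure (μ := (stdGaussian d).prod μ)
    hF.aestronglyMeasurable hT.aemeasurable
  rw [map_T_eq μ ht] at h3
  have hnn : Measurable fun q : E × E =>
      Real.toNNReal (cT d t * rexp (-‖q.1 - t • q.2‖ ^ 2 / (2 * (1 - t) ^ 2))) :=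
    Measurable.real_toNNReal (by fun_prop)
  have hid : (fun q : E × E => ENNReal.ofReal
        (cT d t * rexp (-‖q.1 - t • q.2‖ ^ 2 / (2 * (1 - t) ^ 2))))
      = fun q : E × E => ((Real.toNNReal
        (cT d t * rexp (-‖q.1 - t • q.2‖ ^ 2 / (2 * (1 - t) ^ 2)))) : ℝ≥0∞) := rfl
  rw [hid] at h3
  have h4 := integrable_withDensity_iff_integrable_smul hnn (μ := volume.prod μ) (g := F)
  have h5 := h3.symm.trans h4
  have hfun : (fun x : E × E => (Real.toNNReal
        (cT d t * rexp (-‖x.1 - t • x.2‖ ^ 2 / (2 * (1 - t) ^ 2)))) • F x)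
      = fun q : E × E => (cT d t * rexp (-‖q.1 - t • q.2‖ ^ 2 / (2 * (1 - t) ^ 2))) • F q := by
    funext q
    rw [NNReal.smul_def, Real.coe_toNNReal _ (mul_nonneg (cT_pos ht).le (Real.exp_pos _).le)]
  rw [← hfun]
  exact h5

lemma per_t (μ : Measure E) [IsProbabilityMeasure μ] (hsupp : IsCompact (mSupport μ))
    {t : ℝ} (ht : t ∈ Ioo (0:ℝ) 1) (g : E → E) (hg : Continuous g)
    (hvc : Continuous (idealVel μ t))
    (hJv : (∫⁻ p : E × E, ENNReal.ofReal
        (‖idealVel μ t ((1 - t) • p.1 + t • p.2) - (p.2 - p.1)‖ ^ 2)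
        ∂((stdGaussian d).prod μ)) ≠ ⊤) :
    (∫⁻ p : E × E, ENNReal.ofReal
        (‖idealVel μ t ((1 - t) • p.1 + t • p.2) - (p.2 - p.1)‖ ^ 2)
        ∂((stdGaussian d).prod μ))
      ≤ ∫⁻ p : E × E, ENNReal.ofReal
          (‖g ((1 - t) • p.1 + t • p.2) - (p.2 - p.1)‖ ^ 2)
          ∂((stdGaussian d).prod μ) := by
  have h1 : (0:ℝ) < 1 - t := by linarith [ht.2]
  set ν := (stdGaussian d).prod μ with hν
  set v : E → E := idealVel μ t with hvdef
  set X : E × E → E := fun p => (1 - t) • p.1 + t • p.2 with hX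
  set Y : E × E → E := fun p => p.2 - p.1 with hY
  have hXc : Continuous X := by fun_prop
  have hYc : Continuous Y := by fun_prop
  by_cases hJg : (∫⁻ p : E × E, ENNReal.ofReal (‖g (X p) - Y p‖ ^ 2) ∂ν) = ⊤
  · rw [hJg]; exact le_top
  -- integrability of the squared norms
  have sqint : ∀ (h : E × E → E), Continuous h →
      (∫⁻ p : E × E, ENNReal.ofReal (‖h p‖ ^ 2) ∂ν) ≠ ⊤ →
      Integrable (fun p => ‖h p‖ ^ 2) ν := by
    intro h hc hfin
    refine ⟨(hc.norm.pow 2).aestronglyMeasurable, ?_⟩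
    rw [hasFiniteIntegral_iff_ofReal (Filter.Eventually.of_forall fun p => by positivity)]
    exact lt_top_iff_ne_top.2 hfin
  have hv2 : Integrable (fun p => ‖v (X p) - Y p‖ ^ 2) ν :=
    sqint _ (((hvc.comp hXc).sub hYc)) hJv
  have hg2 : Integrable (fun p => ‖g (X p) - Y p‖ ^ 2) ν :=
    sqint _ (((hg.comp hXc).sub hYc)) hJg
  have hu2 : Integrable (fun p => ‖g (X p) - v (X p)‖ ^ 2) ν := by
    refine Integrable.mono' ((hg2.add hv2).const_mul 2)
      (((hg.comp hXc).sub (hvc.comp hXc)).norm.pow 2).aestronglyMeasurable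
      (Filter.Eventually.of_forall fun p => ?_)
    have htri : ‖g (X p) - v (X p)‖ ≤ ‖g (X p) - Y p‖ + ‖v (X p) - Y p‖ := by
      have : g (X p) - v (X p) = (g (X p) - Y p) - (v (X p) - Y p) := by abel
      rw [this]
      exact norm_sub_le _ _
    rw [Real.norm_eq_abs, abs_of_nonneg (by positivity)]
    simp only [Pi.add_apply]
    have h2' : ‖g (X p) - v (X p)‖ ^ 2 ≤ (‖g (X p) - Y p‖ + ‖v (X p) - Y p‖) ^ 2 :=
      pow_le_pow_left₀ (norm_nonneg _) htri 2
    nlinarith [h2', sq_nonneg (‖g (X p) - Y p‖ - ‖v (X p) - Y p‖)]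
  have hcross : Integrable (fun p => ⟪g (X p) - v (X p), v (X p) - Y p⟫) ν := by
    have hic : Continuous fun p : E × E => ⟪g (X p) - v (X p), v (X p) - Y p⟫ :=
      Continuous.inner ((hg.comp hXc).sub (hvc.comp hXc)) ((hvc.comp hXc).sub hYc)
    refine Integrable.mono' (hu2.add hv2) hic.aestronglyMeasurable
      (Filter.Eventually.of_forall fun p => ?_)
    have h1' := abs_real_inner_le_norm (g (X p) - v (X p)) (v (X p) - Y p)
    rw [Real.norm_eq_abs]
    simp only [Pi.add_apply]
    nlinarith [norm_nonneg (g (X p) - v (X p)), norm_nonneg (v (X p) - Y p),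
      sq_nonneg (‖g (X p) - v (X p)‖ - ‖v (X p) - Y p‖)]
  -- cross term vanishes
  have hkey : ∫ p, ⟪g (X p) - v (X p), v (X p) - Y p⟫ ∂ν = 0 := by
    set F : E × E → ℝ := fun q => ⟪g q.1 - v q.1, v q.1 - (1 - t)⁻¹ • (q.2 - q.1)⟫ with hF
    have hFc : Continuous F := by
      apply Continuous.inner <;> fun_prop
    have hFT : ∀ p : E × E, F ((1 - t) • p.1 + t • p.2, p.2) = ⟪g (X p) - v (X p), v (X p) - Y p⟫ := by
      intro p
      have e1 : p.2 - ((1 - t) • p.1 + t • p.2) = (1 - t) • (p.2 - p.1) := by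
        module
      have e2 : (1 - t)⁻¹ • (p.2 - ((1 - t) • p.1 + t • p.2)) = Y p := by
        rw [e1, smul_smul, inv_mul_cancel₀ h1.ne', one_smul]
      simp only [hF, e2, hX, hY]
    have hcross' : Integrable (fun p : E × E => F ((1 - t) • p.1 + t • p.2, p.2)) ν := by
      refine hcross.congr (Filter.Eventually.of_forall fun p => ?_)
      exact (hFT p).symm
    have hρF : Integrable (fun q : E × E =>
        (cT d t * rexp (-‖q.1 - t • q.2‖ ^ 2 / (2 * (1 - t) ^ 2))) • F q) (volume.prod μ) :=
      (transfer_integrable μ ht hFc).1 hcross'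
    have step1 : ∫ p, ⟪g (X p) - v (X p), v (X p) - Y p⟫ ∂ν
        = ∫ p : E × E, F ((1 - t) • p.1 + t • p.2, p.2) ∂ν := by
      apply integral_congr_ae
      exact Filter.Eventually.of_forall fun p => (hFT p).symm
    rw [step1, transfer_integral μ ht hFc, integral_prod _ hρF]
    have inner0 : ∀ x : E, (∫ x₁,
        (cT d t * rexp (-‖x - t • x₁‖ ^ 2 / (2 * (1 - t) ^ 2))) • F (x, x₁) ∂μ) = 0 := by
      intro x
      set w : E → ℝ := fun x₁ => rexp (-‖x - t • x₁‖ ^ 2 / (2 * (1 - t) ^ 2)) with hw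
      set c₀ : E := v x + (1 - t)⁻¹ • x with hc₀
      have hdecomp : ∀ x₁ : E, (cT d t * w x₁) • (v x - (1 - t)⁻¹ • (x₁ - x))
          = (cT d t) • (w x₁ • c₀) - (cT d t * (1 - t)⁻¹) • (w x₁ • x₁) := by
        intro x₁
        simp only [hc₀, smul_sub, smul_add, smul_smul, sub_smul, mul_comm, mul_assoc]
        module
      have hGint : Integrable (fun x₁ => (cT d t * w x₁) • (v x - (1 - t)⁻¹ • (x₁ - x))) μ := by
        rw [show (fun x₁ => (cT d t * w x₁) • (v x - (1 - t)⁻¹ • (x₁ - x)))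
            = fun x₁ => (cT d t) • (w x₁ • c₀) - (cT d t * (1 - t)⁻¹) • (w x₁ • x₁)
          from funext hdecomp]
        exact (((w_integrable μ ht x).smul_const c₀).smul (cT d t)).sub
          ((wx_integrable μ hsupp ht x).smul (cT d t * (1 - t)⁻¹))
      have hinner : ∀ x₁ : E, (cT d t * w x₁) • F (x, x₁)
          = ⟪g x - v x, (cT d t * w x₁) • (v x - (1 - t)⁻¹ • (x₁ - x))⟫ := by
        intro x₁
        rw [real_inner_smul_right]
        rfl
      calc (∫ x₁, (cT d t * w x₁) • F (x, x₁) ∂μ)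
          = ∫ x₁, ⟪g x - v x, (cT d t * w x₁) • (v x - (1 - t)⁻¹ • (x₁ - x))⟫ ∂μ := by
            exact integral_congr_ae (Filter.Eventually.of_forall fun x₁ => hinner x₁)
        _ = ⟪g x - v x, ∫ x₁, (cT d t * w x₁) • (v x - (1 - t)⁻¹ • (x₁ - x)) ∂μ⟫ :=
            integral_inner hGint _
        _ = 0 := by
            have hG0 : (∫ x₁, (cT d t * w x₁) • (v x - (1 - t)⁻¹ • (x₁ - x)) ∂μ) = 0 := by
              rw [show (fun x₁ => (cT d t * w x₁) • (v x - (1 - t)⁻¹ • (x₁ - x)))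
                  = fun x₁ => (cT d t) • (w x₁ • c₀) - (cT d t * (1 - t)⁻¹) • (w x₁ • x₁)
                from funext hdecomp]
              have hI1 : Integrable (fun x₁ => cT d t • (w x₁ • c₀)) μ :=
                ((w_integrable μ ht x).smul_const c₀).smul (cT d t)
              have hI2 : Integrable (fun x₁ => (cT d t * (1 - t)⁻¹) • (w x₁ • x₁)) μ :=
                (wx_integrable μ hsupp ht x).smul (cT d t * (1 - t)⁻¹)
              rw [integral_sub hI1 hI2]
              rw [integral_smul, integral_smul, integral_smul_const]
              have hgw : gaussWeight μ t x ≠ 0 := (gaussWeight_pos μ ht x).ne'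
              have hwint : (∫ x₁, w x₁ ∂μ) = gaussWeight μ t x := rfl
              set m : E := ∫ x₁, w x₁ • x₁ ∂μ with hm
              have hvx : v x = (1 - t)⁻¹ • ((gaussWeight μ t x)⁻¹ • m - x) := rfl
              rw [hwint, hc₀, hvx]
              match_scalars <;> (field_simp; try ring)
            rw [hG0, inner_zero_right]
    rw [integral_congr_ae (Filter.Eventually.of_forall inner0)]
    simp
  -- put everything together over the reals
  have hpt : ∀ p : E × E, ‖g (X p) - Y p‖ ^ 2
      = ‖g (X p) - v (X p)‖ ^ 2 + 2 * ⟪g (X p) - v (X p), v (X p) - Y p⟫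
        + ‖v (X p) - Y p‖ ^ 2 := by
    intro p
    have h := norm_add_sq_real (g (X p) - v (X p)) (v (X p) - Y p)
    rw [show g (X p) - v (X p) + (v (X p) - Y p) = g (X p) - Y p from by abel] at h
    exact h
  have hsplit : ∫ p, ‖g (X p) - Y p‖ ^ 2 ∂ν
      = (∫ p, ‖g (X p) - v (X p)‖ ^ 2 ∂ν) + (∫ p, ‖v (X p) - Y p‖ ^ 2 ∂ν) := by
    rw [integral_congr_ae (Filter.Eventually.of_forall hpt)]
    have hB : Integrable (fun p => 2 * ⟪g (X p) - v (X p), v (X p) - Y p⟫) ν :=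
      hcross.const_mul 2
    have hA : Integrable (fun p => ‖g (X p) - v (X p)‖ ^ 2
        + 2 * ⟪g (X p) - v (X p), v (X p) - Y p⟫) ν := hu2.add hB
    rw [integral_add hA hv2, integral_add hu2 hB, integral_const_mul, hkey]
    ring
  have hineq : ∫ p, ‖v (X p) - Y p‖ ^ 2 ∂ν ≤ ∫ p, ‖g (X p) - Y p‖ ^ 2 ∂ν := by
    rw [hsplit]
    have : 0 ≤ ∫ p, ‖g (X p) - v (X p)‖ ^ 2 ∂ν :=
      integral_nonneg fun p => by positivity
    linarith
  calc (∫⁻ p : E × E, ENNReal.ofReal (‖v (X p) - Y p‖ ^ 2) ∂ν)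
      = ENNReal.ofReal (∫ p, ‖v (X p) - Y p‖ ^ 2 ∂ν) :=
        (ofReal_integral_eq_lintegral_ofReal hv2
          (Filter.Eventually.of_forall fun p => by positivity)).symm
    _ ≤ ENNReal.ofReal (∫ p, ‖g (X p) - Y p‖ ^ 2 ∂ν) := ENNReal.ofReal_le_ofReal hineq
    _ = ∫⁻ p : E × E, ENNReal.ofReal (‖g (X p) - Y p‖ ^ 2) ∂ν :=
        ofReal_integral_eq_lintegral_ofReal hg2
          (Filter.Eventually.of_forall fun p => by positivity)

end Helpers

/-- For a compactly supported probability measure `μ` on `ℝ^d` and `t ∈ (0,1)`,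
the Gaussian weight integral is strictly positive (so the ideal velocity field is
well defined), and if `v*` is continuous on `(0,1) × ℝ^d` with `L_μ(v*) < ∞`, then
`v*` is a global minimizer of the flow-matching loss over continuous velocity
fields. -/
theorem stmt0 {d : ℕ} (hd : 1 ≤ d) (μ : Measure (EuclideanSpace ℝ (Fin d)))
    [IsProbabilityMeasure μ] (hsupp : IsCompact (mSupport μ)) :
    (∀ t ∈ Ioo (0 : ℝ) 1, ∀ x, 0 < gaussWeight μ t x) ∧
    (ContinuousOn (fun p : ℝ × EuclideanSpace ℝ (Fin d) => idealVel μ p.1 p.2)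
        (Ioo (0 : ℝ) 1 ×ˢ (univ : Set (EuclideanSpace ℝ (Fin d)))) →
      FMLoss μ (idealVel μ) < ⊤ →
      ∀ f : ℝ → EuclideanSpace ℝ (Fin d) → EuclideanSpace ℝ (Fin d),
        ContinuousOn (fun p : ℝ × EuclideanSpace ℝ (Fin d) => f p.1 p.2)
          (Ioo (0 : ℝ) 1 ×ˢ (univ : Set (EuclideanSpace ℝ (Fin d)))) →
        FMLoss μ (idealVel μ) ≤ FMLoss μ f) := by
  classical
  constructor
  · intro t ht x
    exact gaussWeight_pos μ ht x
  · intro hcont hfin f hf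
    have hslice : ∀ (F : ℝ → EuclideanSpace ℝ (Fin d) → EuclideanSpace ℝ (Fin d)),
        ContinuousOn (fun p : ℝ × EuclideanSpace ℝ (Fin d) => F p.1 p.2)
          (Ioo (0:ℝ) 1 ×ˢ (univ : Set (EuclideanSpace ℝ (Fin d)))) →
        ∀ t ∈ Ioo (0:ℝ) 1, Continuous (F t) := by
      intro F hF t ht
      rw [← continuousOn_univ]
      have hmap : MapsTo (fun x : EuclideanSpace ℝ (Fin d) => (t, x))
          (univ : Set (EuclideanSpace ℝ (Fin d)))
          (Ioo (0:ℝ) 1 ×ˢ (univ : Set (EuclideanSpace ℝ (Fin d)))) :=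
        fun x _ => ⟨ht, mem_univ x⟩
      exact hF.comp ((continuous_const.prodMk continuous_id).continuousOn) hmap
    unfold FMLoss
    set ν := (stdGaussian d).prod μ with hν
    set S : Set (ℝ × (EuclideanSpace ℝ (Fin d) × EuclideanSpace ℝ (Fin d))) :=
      (Ioo (0:ℝ) 1) ×ˢ (univ : Set (EuclideanSpace ℝ (Fin d) × EuclideanSpace ℝ (Fin d)))
      with hS
    set H : ℝ × (EuclideanSpace ℝ (Fin d) × EuclideanSpace ℝ (Fin d)) → ℝ≥0∞ :=
      S.piecewise (fun z => ENNReal.ofReal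
        (‖idealVel μ z.1 ((1 - z.1) • z.2.1 + z.1 • z.2.2) - (z.2.2 - z.2.1)‖ ^ 2)) 0 with hH
    have hGcont : ContinuousOn (fun z : ℝ × (EuclideanSpace ℝ (Fin d) × EuclideanSpace ℝ (Fin d)) =>
        ENNReal.ofReal (‖idealVel μ z.1 ((1 - z.1) • z.2.1 + z.1 • z.2.2)
          - (z.2.2 - z.2.1)‖ ^ 2)) S := by
      have hφ : Continuous fun z : ℝ × (EuclideanSpace ℝ (Fin d) × EuclideanSpace ℝ (Fin d)) =>
          (z.1, (1 - z.1) • z.2.1 + z.1 • z.2.2) := by fun_prop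
      have hmapsto : MapsTo (fun z : ℝ × (EuclideanSpace ℝ (Fin d) × EuclideanSpace ℝ (Fin d)) =>
          (z.1, (1 - z.1) • z.2.1 + z.1 • z.2.2)) S
          (Ioo (0:ℝ) 1 ×ˢ (univ : Set (EuclideanSpace ℝ (Fin d)))) :=
        fun z hz => ⟨hz.1, mem_univ _⟩
      have h1 : ContinuousOn (fun z : ℝ × (EuclideanSpace ℝ (Fin d) × EuclideanSpace ℝ (Fin d)) =>
          idealVel μ z.1 ((1 - z.1) • z.2.1 + z.1 • z.2.2)) S :=
        hcont.comp hφ.continuousOn hmapsto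
      have h2 : ContinuousOn (fun z : ℝ × (EuclideanSpace ℝ (Fin d) × EuclideanSpace ℝ (Fin d)) =>
          idealVel μ z.1 ((1 - z.1) • z.2.1 + z.1 • z.2.2) - (z.2.2 - z.2.1)) S :=
        h1.sub (Continuous.continuousOn (by fun_prop))
      exact ENNReal.continuous_ofReal.comp_continuousOn ((h2.norm).pow 2)
    have hHmeas : Measurable H :=
      measurable_piecewise_zero (isOpen_Ioo.prod isOpen_univ) hGcont
    have hJmeas : Measurable fun t : ℝ => ∫⁻ p, H (t, p) ∂ν := hHmeas.lintegral_prod_right'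
    have hcongr : ∀ t ∈ Ioo (0:ℝ) 1,
        (∫⁻ p, ENNReal.ofReal (‖idealVel μ t ((1 - t) • p.1 + t • p.2)
            - (p.2 - p.1)‖ ^ 2) ∂ν) = ∫⁻ p, H (t, p) ∂ν := by
      intro t ht'
      refine lintegral_congr fun p => ?_
      rw [hH]
      exact (Set.piecewise_eq_of_mem S (fun z => ENNReal.ofReal
        (‖idealVel μ z.1 ((1 - z.1) • z.2.1 + z.1 • z.2.2) - (z.2.2 - z.2.1)‖ ^ 2)) 0
        (show (t, p) ∈ S from ⟨ht', mem_univ _⟩)).symm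
    have hfin' : (∫⁻ t in Ioo (0:ℝ) 1, ∫⁻ p, H (t, p) ∂ν) ≠ ⊤ := by
      rw [← setLIntegral_congr_fun measurableSet_Ioo
        hcongr]
      exact hfin.ne
    have hae : ∀ᵐ t ∂(volume.restrict (Ioo (0:ℝ) 1)), (∫⁻ p, H (t, p) ∂ν) < ⊤ :=
      ae_lt_top hJmeas hfin'
    apply lintegral_mono_ae
    filter_upwards [ae_restrict_mem measurableSet_Ioo, hae] with t ht' hfint
    have hJv : (∫⁻ p, ENNReal.ofReal (‖idealVel μ t ((1 - t) • p.1 + t • p.2)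
        - (p.2 - p.1)‖ ^ 2) ∂ν) ≠ ⊤ := by
      rw [hcongr t ht']
      exact hfint.ne
    exact per_t μ hsupp ht' (f t) (hslice f hf t ht') (hslice (idealVel μ) hcont t ht') hJv
end

section
/- Let d ≥ 1, let μ_y and μ_∅ be compactly supported probability measures on ℝ^d, and let q ∈ (0,1). For c ∈ {y, ∅}, let v*^c_t(x) := (m^c_t(x) - x)/(1-t) with m^c_t(x) := (∫ x₁ exp(-‖x - t x₁‖²/(2(1-t)²)) dμ_c(x₁)) / (∫ exp(-‖x - t x₁‖²/(2(1-t)²)) dμ_c(x₁)). Assume v*^y and v*^∅ are continuous on (0,1) × ℝ^d with L_{μ_y}(v*^y) < ∞ and L_{μ_∅}(v*^∅) < ∞. Then for every pair of continuous maps f, g : (0,1) × ℝ^d → ℝ^d, q·L_{μ_y}(f) + (1-q)·L_{μ_∅}(g) ≥ q·L_{μ_y}(v*^y) + (1-q)·L_{μ_∅}(v*^∅); that is, the pair (v*^y, v*^∅) is a global minimizer of the classifier-free-guidance training functional L^cfg(f,g) := q·L_{μ_y}(f) + (1-q)·L_{μ_∅}(g). -/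
open MeasureTheory Real Set
open scoped ENNReal

/-! ### Auxiliary development -/

open scoped RealInnerProductSpace

abbrev Ed (d : ℕ) := EuclideanSpace ℝ (Fin d)

variable {d : ℕ}

instance : SFinite (stdGaussian d) := by unfold stdGaussian; infer_instance

/-- The Gaussian weight integrand. -/
noncomputable def wf (t : ℝ) (x x₁ : Ed d) : ℝ :=
  Real.exp (-‖x - t • x₁‖ ^ 2 / (2 * (1 - t) ^ 2))

lemma wf_cont (t : ℝ) : Continuous (fun p : Ed d × Ed d => wf t p.1 p.2) := by
  unfold wf; fun_prop

lemma wf_pos (t : ℝ) (x x₁ : Ed d) : 0 < wf t x x₁ := Real.exp_pos _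

lemma wf_le_one (t : ℝ) (x x₁ : Ed d) : wf t x x₁ ≤ 1 := by
  rw [wf, ← Real.exp_zero]
  apply Real.exp_le_exp.2
  apply div_nonpos_of_nonpos_of_nonneg
  · nlinarith [sq_nonneg ‖x - t • x₁‖]
  · positivity

lemma aux_bound {s u : ℝ} (hs0 : 0 < s) (hs1 : s < 1) (hu : 0 ≤ u) :
    u * Real.exp (-u ^ 2 / (2 * s ^ 2)) ≤ 2 := by
  rcases le_or_gt u 2 with h | h
  · calc u * Real.exp (-u ^ 2 / (2 * s ^ 2)) ≤ u * 1 := by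
          apply mul_le_mul_of_nonneg_left _ hu
          rw [← Real.exp_zero]
          apply Real.exp_le_exp.2
          apply div_nonpos_of_nonpos_of_nonneg
          · nlinarith [sq_nonneg u]
          · positivity
    _ ≤ 2 := by linarith
  · have h2 : Real.exp (-u ^ 2 / (2 * s ^ 2)) ≤ Real.exp (-(u ^ 2) / 2) := by
      apply Real.exp_le_exp.2
      rw [div_le_div_iff₀ (by positivity) (by norm_num)]
      nlinarith [mul_nonneg (mul_nonneg (sub_nonneg.2 hs1.le) (by linarith : (0:ℝ) ≤ 1 + s))
        (sq_nonneg u)]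
    have h3 : Real.exp (-(u ^ 2) / 2) ≤ (u ^ 2 / 2)⁻¹ := by
      rw [neg_div, Real.exp_neg]
      apply inv_anti₀ (by positivity)
      have := Real.add_one_le_exp (u ^ 2 / 2)
      linarith
    have hu2 : (0:ℝ) < u ^ 2 / 2 := by positivity
    calc u * Real.exp (-u ^ 2 / (2 * s ^ 2)) ≤ u * (u ^ 2 / 2)⁻¹ :=
          mul_le_mul_of_nonneg_left (h2.trans h3) hu
      _ = 2 / u := by field_simp
      _ ≤ 2 := by rw [div_le_iff₀ (by linarith)]; nlinarith

lemma wf_mul_norm_le {t : ℝ} (ht : t ∈ Ioo (0:ℝ) 1) (x x₁ : Ed d) :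
    wf t x x₁ * ‖x₁‖ ≤ (‖x‖ + 2) / t := by
  obtain ⟨ht0, ht1⟩ := ht
  have hw1 := wf_le_one t x x₁
  have hwpos := (wf_pos t x x₁).le
  have hub : ‖x - t • x₁‖ * wf t x x₁ ≤ 2 :=
    aux_bound (by linarith) (by linarith) (norm_nonneg _)
  have htn : t * ‖x₁‖ ≤ ‖x‖ + ‖x - t • x₁‖ := by
    have h : ‖t • x₁‖ = t * ‖x₁‖ := by
      rw [norm_smul, Real.norm_eq_abs, abs_of_pos ht0]
    calc t * ‖x₁‖ = ‖x - (x - t • x₁)‖ := by rw [sub_sub_cancel, h]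
      _ ≤ ‖x‖ + ‖x - t • x₁‖ := norm_sub_le _ _
  rw [le_div_iff₀ ht0]
  calc wf t x x₁ * ‖x₁‖ * t = wf t x x₁ * (t * ‖x₁‖) := by ring
    _ ≤ wf t x x₁ * (‖x‖ + ‖x - t • x₁‖) := mul_le_mul_of_nonneg_left htn hwpos
    _ = wf t x x₁ * ‖x‖ + ‖x - t • x₁‖ * wf t x x₁ := by ring
    _ ≤ 1 * ‖x‖ + 2 := by gcongr
    _ = ‖x‖ + 2 := by ring

variable (μ : Measure (Ed d)) [IsProbabilityMeasure μ]

lemma integrable_wf (t : ℝ) (x : Ed d) :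
    Integrable (fun x₁ : Ed d => wf t x x₁) μ := by
  apply Integrable.mono' (integrable_const (1:ℝ))
  · exact ((wf_cont t).comp (Continuous.prodMk_right x)).aestronglyMeasurable
  · filter_upwards with x₁
    rw [Real.norm_eq_abs, abs_of_pos (wf_pos t x x₁)]
    exact wf_le_one t x x₁

lemma integrable_wf_smul {t : ℝ} (ht : t ∈ Ioo (0:ℝ) 1) (x : Ed d) :
    Integrable (fun x₁ : Ed d => wf t x x₁ • x₁) μ := by
  apply Integrable.mono' (integrable_const ((‖x‖ + 2) / t))
  · apply Continuous.aestronglyMeasurable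
    exact ((wf_cont t).comp (Continuous.prodMk_right x)).smul continuous_id
  · filter_upwards with x₁
    rw [norm_smul, Real.norm_eq_abs, abs_of_pos (wf_pos t x x₁)]
    exact wf_mul_norm_le ht x x₁

lemma gaussWeight_eq (t : ℝ) (x : Ed d) :
    gaussWeight μ t x = ∫ x₁, wf t x x₁ ∂μ := rfl

lemma gaussWeight_pos_s1 (t : ℝ) (x : Ed d) : 0 < gaussWeight μ t x := by
  rw [gaussWeight_eq]
  rw [integral_pos_iff_support_of_nonneg (fun x₁ => (wf_pos t x x₁).le) (integrable_wf μ t x)]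
  have : (Function.support fun x₁ : Ed d => wf t x x₁) = univ := by
    ext x₁; simp [Function.support, (wf_pos t x x₁).ne']
  rw [this]
  simp


lemma comp_var {s : ℝ} (hs : 0 < s) (b : Ed d) (R : Ed d → ℝ) :
    ∫ x₀ : Ed d, R (s • x₀ + b) ∂volume = ((s : ℝ) ^ d)⁻¹ * ∫ x, R x ∂volume := by
  have h1 : ∫ x₀ : Ed d, R (s • x₀ + b) ∂volume
      = ∫ x₀ : Ed d, (fun y => R (y + b)) (s • x₀) ∂volume := rfl
  rw [h1, Measure.integral_comp_smul_of_nonneg volume (fun y => R (y + b)) s (hR := hs.le)]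
  rw [integral_add_right_eq_self R b, finrank_euclideanSpace_fin, smul_eq_mul]

lemma comp_var_integrable {s : ℝ} (hs : 0 < s) (b : Ed d) (R : Ed d → ℝ) :
    Integrable (fun x₀ : Ed d => R (s • x₀ + b)) volume ↔ Integrable R volume := by
  have A := integrable_comp_smul_iff volume (fun y : Ed d => R (y + b)) hs.ne'
  have B : Integrable (fun y : Ed d => R (y + b)) volume ↔ Integrable R volume :=
    (measurePreserving_add_right volume b).integrable_comp_emb
      (MeasurableEquiv.addRight b).measurableEmbedding
  exact A.trans B

lemma integrable_key {t : ℝ} (ht : t ∈ Ioo (0:ℝ) 1) (x v : Ed d) :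
    Integrable (fun x₁ : Ed d => wf t x x₁ • (v - (1 - t)⁻¹ • (x₁ - x))) μ := by
  have h : (fun x₁ : Ed d => wf t x x₁ • (v - (1 - t)⁻¹ • (x₁ - x)))
      = fun x₁ : Ed d => wf t x x₁ • v - (1 - t)⁻¹ • (wf t x x₁ • x₁ - wf t x x₁ • x) := by
    funext x₁; module
  rw [h]
  exact ((integrable_wf μ t x).smul_const v).sub
    (((integrable_wf_smul μ ht x).sub ((integrable_wf μ t x).smul_const x)).smul ((1 - t)⁻¹ : ℝ))

/-- The key vanishing property: the ideal velocity is the `wf`-weighted mean. -/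
lemma key_vanish {t : ℝ} (ht : t ∈ Ioo (0:ℝ) 1) (x : Ed d) :
    ∫ x₁, wf t x x₁ • (idealVel μ t x - (1 - t)⁻¹ • (x₁ - x)) ∂μ = 0 := by
  have hg := gaussWeight_pos_s1 μ t x
  have h1 : Integrable (fun x₁ : Ed d => wf t x x₁ • idealVel μ t x) μ :=
    (integrable_wf μ t x).smul_const _
  have h2 : Integrable (fun x₁ : Ed d => wf t x x₁ • ((1 - t)⁻¹ • (x₁ - x))) μ := by
    have : (fun x₁ : Ed d => wf t x x₁ • ((1 - t)⁻¹ • (x₁ - x)))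
        = fun x₁ : Ed d => (1 - t)⁻¹ • (wf t x x₁ • x₁ - wf t x x₁ • x) := by
      funext x₁; module
    rw [this]
    exact (((integrable_wf_smul μ ht x).sub ((integrable_wf μ t x).smul_const x)).smul ((1 - t)⁻¹ : ℝ))
  have heq : (fun x₁ : Ed d => wf t x x₁ • (idealVel μ t x - (1 - t)⁻¹ • (x₁ - x)))
      = fun x₁ : Ed d => wf t x x₁ • idealVel μ t x - wf t x x₁ • ((1 - t)⁻¹ • (x₁ - x)) := by
    funext x₁; rw [smul_sub]
  rw [heq, integral_sub h1 h2]
  have e1 : ∫ x₁, wf t x x₁ • idealVel μ t x ∂μ = gaussWeight μ t x • idealVel μ t x := by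
    rw [gaussWeight_eq, integral_smul_const]
  have e2 : ∫ x₁, wf t x x₁ • ((1 - t)⁻¹ • (x₁ - x)) ∂μ
      = (1 - t)⁻¹ • ((∫ x₁, wf t x x₁ • x₁ ∂μ) - gaussWeight μ t x • x) := by
    have : (fun x₁ : Ed d => wf t x x₁ • ((1 - t)⁻¹ • (x₁ - x)))
        = fun x₁ : Ed d => (1 - t)⁻¹ • (wf t x x₁ • x₁ - wf t x x₁ • x) := by
      funext x₁; module
    rw [this, integral_smul,
      integral_sub (integrable_wf_smul μ ht x) ((integrable_wf μ t x).smul_const x),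
      gaussWeight_eq, integral_smul_const]
  rw [e1, e2, sub_eq_zero]
  have hpm : postMean μ t x = (gaussWeight μ t x)⁻¹ • ∫ x₁, wf t x x₁ • x₁ ∂μ := rfl
  rw [idealVel, hpm, smul_comm, smul_sub, smul_inv_smul₀ hg.ne']

lemma meas_idealVel : Measurable (fun p : ℝ × Ed d => idealVel μ p.1 p.2) := by
  have hK : Measurable (fun q : (ℝ × Ed d) × Ed d =>
      Real.exp (-‖q.1.2 - q.1.1 • q.2‖ ^ 2 / (2 * (1 - q.1.1) ^ 2))) := by
    apply Real.continuous_exp.measurable.comp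
    apply Measurable.div
    · fun_prop
    · fun_prop
  have hg : Measurable (fun p : ℝ × Ed d => gaussWeight μ p.1 p.2) := by
    have := (hK.stronglyMeasurable).integral_prod_right' (ν := μ)
    exact this.measurable
  have hI : Measurable (fun p : ℝ × Ed d =>
      ∫ x₁, Real.exp (-‖p.2 - p.1 • x₁‖ ^ 2 / (2 * (1 - p.1) ^ 2)) • x₁ ∂μ) := by
    have h2 : StronglyMeasurable (fun q : (ℝ × Ed d) × Ed d =>
        Real.exp (-‖q.1.2 - q.1.1 • q.2‖ ^ 2 / (2 * (1 - q.1.1) ^ 2)) • q.2) :=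
      (hK.smul measurable_snd).stronglyMeasurable
    exact h2.integral_prod_right'.measurable
  have hpm : Measurable (fun p : ℝ × Ed d => postMean μ p.1 p.2) := by
    unfold postMean
    exact (hg.inv).smul hI
  unfold idealVel
  exact ((measurable_const.sub measurable_fst).inv).smul (hpm.sub measurable_snd)


lemma rho_wf {t : ℝ} (ht : t ∈ Ioo (0:ℝ) 1) (x x₁ : Ed d) :
    (2 * π) ^ (-(d : ℝ) / 2) * Real.exp (-‖(1 - t)⁻¹ • (x - t • x₁)‖ ^ 2 / 2)
      = (2 * π) ^ (-(d : ℝ) / 2) * wf t x x₁ := by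
  have hs0 : (0:ℝ) < 1 - t := by linarith [ht.2]
  have hexp : -‖(1 - t)⁻¹ • (x - t • x₁)‖ ^ 2 / 2 = -‖x - t • x₁‖ ^ 2 / (2 * (1 - t) ^ 2) := by
    rw [norm_smul, Real.norm_eq_abs, abs_of_pos (by positivity : (0:ℝ) < (1 - t)⁻¹), mul_pow,
      inv_pow]
    field_simp
  rw [wf, hexp]

lemma cross_zero {t : ℝ} (ht : t ∈ Ioo (0:ℝ) 1) (H : Ed d → Ed d) (hH : Continuous H)
    (hV : Continuous (idealVel μ t))
    (hInt : Integrable (fun p : Ed d × Ed d =>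
      (⟪H ((1 - t) • p.1 + t • p.2),
        idealVel μ t ((1 - t) • p.1 + t • p.2) - (p.2 - p.1)⟫ : ℝ))
      ((stdGaussian d).prod μ)) :
    ∫ p : Ed d × Ed d, (⟪H ((1 - t) • p.1 + t • p.2),
        idealVel μ t ((1 - t) • p.1 + t • p.2) - (p.2 - p.1)⟫ : ℝ)
      ∂((stdGaussian d).prod μ) = 0 := by
  obtain ⟨ht0, ht1⟩ := ht
  have hs0 : (0:ℝ) < 1 - t := by linarith
  set c : ℝ := (2 * π) ^ (-(d : ℝ) / 2) with hc
  have hcpos : (0:ℝ) < c := Real.rpow_pos_of_pos (by positivity) _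
  set ρ : Ed d → ℝ := fun y => c * Real.exp (-‖y‖ ^ 2 / 2) with hρ
  have hρpos : ∀ y, 0 < ρ y := fun y => mul_pos hcpos (Real.exp_pos _)
  have hρcont : Continuous ρ := by fun_prop
  set P : Ed d × Ed d → ℝ := fun p => (⟪H ((1 - t) • p.1 + t • p.2),
      idealVel μ t ((1 - t) • p.1 + t • p.2) - (p.2 - p.1)⟫ : ℝ) with hPdef
  set G : Ed d → Ed d → ℝ := fun x x₁ => (⟪H x, idealVel μ t x - (1 - t)⁻¹ • (x₁ - x)⟫ : ℝ)
      * ρ ((1 - t)⁻¹ • (x - t • x₁)) with hGdef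
  have hGcont : Continuous (fun q : Ed d × Ed d => G q.1 q.2) := by
    apply Continuous.mul
    · exact (hH.comp continuous_fst).inner
        ((hV.comp continuous_fst).sub (((continuous_snd.sub continuous_fst)).const_smul
          (1 - t)⁻¹))
    · exact hρcont.comp ((continuous_fst.sub
        (continuous_snd.const_smul t)).const_smul (1 - t)⁻¹)
  -- pointwise change of variables identity
  have hpt : ∀ x₀ x₁ : Ed d, G ((1 - t) • x₀ + t • x₁) x₁ = ρ x₀ * P (x₀, x₁) := by
    intro x₀ x₁
    have e1 : (1 - t)⁻¹ • ((1 - t) • x₀ + t • x₁ - t • x₁) = x₀ := by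
      rw [add_sub_cancel_right, inv_smul_smul₀ hs0.ne']
    have e2 : (1 - t)⁻¹ • (x₁ - ((1 - t) • x₀ + t • x₁)) = x₁ - x₀ := by
      have h : x₁ - ((1 - t) • x₀ + t • x₁) = (1 - t) • (x₁ - x₀) := by module
      rw [h, inv_smul_smul₀ hs0.ne']
    simp only [hGdef, hPdef, e1, e2]
    ring
  have hptn : ∀ x₀ x₁ : Ed d, |G ((1 - t) • x₀ + t • x₁) x₁| = ρ x₀ * |P (x₀, x₁)| := by
    intro x₀ x₁
    rw [hpt x₀ x₁, abs_mul, abs_of_pos (hρpos x₀)]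
  -- Gaussian integral as a density integral
  have hwd : ∀ φ : Ed d → ℝ, ∫ x₀, φ x₀ ∂(stdGaussian d) = ∫ x₀, ρ x₀ * φ x₀ ∂volume := by
    intro φ
    have hγ : stdGaussian d = volume.withDensity fun y => ((ρ y).toNNReal : ℝ≥0∞) := rfl
    rw [hγ, integral_withDensity_eq_integral_smul (by fun_prop : Measurable fun y : Ed d => (ρ y).toNNReal) φ]
    congr 1
    funext y
    rw [NNReal.smul_def, Real.coe_toNNReal _ (hρpos y).le, smul_eq_mul]
  -- step 2: change of variables per x₁
  have step2 : ∀ x₁ : Ed d, ∫ x₀, P (x₀, x₁) ∂(stdGaussian d)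
      = ((1 - t) ^ d)⁻¹ * ∫ x, G x x₁ ∂volume := by
    intro x₁
    rw [hwd]
    have h : (fun x₀ : Ed d => ρ x₀ * P (x₀, x₁))
        = fun x₀ : Ed d => (fun x => G x x₁) ((1 - t) • x₀ + t • x₁) :=
      funext fun x₀ => (hpt x₀ x₁).symm
    rw [h, comp_var hs0 (t • x₁) (fun x => G x x₁)]
  have step2n : ∀ x₁ : Ed d, ∫ x₀, |P (x₀, x₁)| ∂(stdGaussian d)
      = ((1 - t) ^ d)⁻¹ * ∫ x, |G x x₁| ∂volume := by
    intro x₁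
    rw [hwd]
    have h : (fun x₀ : Ed d => ρ x₀ * |P (x₀, x₁)|)
        = fun x₀ : Ed d => (fun x => |G x x₁|) ((1 - t) • x₀ + t • x₁) :=
      funext fun x₀ => (hptn x₀ x₁).symm
    rw [h, comp_var hs0 (t • x₁) (fun x => |G x x₁|)]
  -- integrability of G on μ.prod volume (for Fubini swap)
  have hGmeas : AEStronglyMeasurable (Function.uncurry fun x₁ x : Ed d => G x x₁)
      (μ.prod volume) := by
    exact (hGcont.comp (continuous_snd.prodMk continuous_fst)).aestronglyMeasurable
  have hswap : Integrable (Function.uncurry fun x₁ x : Ed d => G x x₁) (μ.prod volume) := by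
    rw [integrable_prod_iff hGmeas]
    constructor
    · filter_upwards [hInt.prod_left_ae] with x₁ h2
      -- h2 : Integrable (fun x₀ => P (x₀, x₁)) (stdGaussian d)
      have hγ' : stdGaussian d = volume.withDensity fun y => ((ρ y).toNNReal : ℝ≥0∞) := rfl
      rw [hγ'] at h2
      have h3 : Integrable (fun x₀ : Ed d => (ρ x₀).toNNReal • P (x₀, x₁)) volume :=
        (integrable_withDensity_iff_integrable_smul
          (by fun_prop : Measurable fun y : Ed d => (ρ y).toNNReal)).1 h2
      have h4 : Integrable (fun x₀ : Ed d => (fun x => G x x₁) ((1 - t) • x₀ + t • x₁))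
          volume := by
        apply h3.congr
        filter_upwards with x₀
        rw [NNReal.smul_def, Real.coe_toNNReal _ (hρpos x₀).le, smul_eq_mul]
        exact (hpt x₀ x₁).symm
      exact (comp_var_integrable hs0 (t • x₁) (fun x => G x x₁)).1 h4
    · have h5 := hInt.integral_norm_prod_right
      apply (h5.const_mul ((1 - t) ^ d)).congr
      filter_upwards with x₁
      simp only [Function.uncurry_apply_pair, Real.norm_eq_abs]
      rw [step2n x₁, ← mul_assoc, mul_inv_cancel₀ (by positivity), one_mul]
  -- inner integral vanishes
  have hzero : ∀ x : Ed d, ∫ x₁, G x x₁ ∂μ = 0 := by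
    intro x
    have hGeq : (fun x₁ : Ed d => G x x₁) = fun x₁ : Ed d =>
        c * (⟪H x, wf t x x₁ • (idealVel μ t x - (1 - t)⁻¹ • (x₁ - x))⟫ : ℝ) := by
      funext x₁
      simp only [hGdef]
      rw [real_inner_smul_right]
      have h8 : ρ ((1 - t)⁻¹ • (x - t • x₁)) = c * wf t x x₁ := by
        have h7 := rho_wf ⟨ht0, ht1⟩ x x₁
        rw [← hc] at h7
        rw [hρ]
        exact h7
      rw [h8]
      ring
    rw [hGeq, integral_const_mul]
    rw [integral_inner (integrable_key μ ⟨ht0, ht1⟩ x (idealVel μ t x)) (H x)]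
    rw [key_vanish μ ⟨ht0, ht1⟩ x, inner_zero_right, mul_zero]
  calc ∫ p : Ed d × Ed d, P p ∂((stdGaussian d).prod μ)
      = ∫ x₁, ∫ x₀, P (x₀, x₁) ∂(stdGaussian d) ∂μ := integral_prod_symm P hInt
    _ = ∫ x₁, ((1 - t) ^ d)⁻¹ * ∫ x, G x x₁ ∂volume ∂μ := by
        apply integral_congr_ae
        filter_upwards with x₁
        exact step2 x₁
    _ = ((1 - t) ^ d)⁻¹ * ∫ x₁, ∫ x, G x x₁ ∂volume ∂μ := integral_const_mul _ _
    _ = ((1 - t) ^ d)⁻¹ * ∫ x, ∫ x₁, G x x₁ ∂μ ∂volume := by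
        rw [integral_integral_swap hswap]
    _ = 0 := by
        have : (fun x : Ed d => ∫ x₁, G x x₁ ∂μ) = fun _ => (0:ℝ) := funext hzero
        rw [this, integral_const]
        simp


lemma l2_min {α : Type*} [MeasurableSpace α] (ν : Measure α) (u v z : α → Ed d)
    (hIa : Integrable (fun p => ‖u p - z p‖ ^ 2) ν)
    (hIb : Integrable (fun p => ‖v p - z p‖ ^ 2) ν)
    (hP : Integrable (fun p => (⟪u p - v p, v p - z p⟫ : ℝ)) ν)
    (hDm : AEStronglyMeasurable (fun p => ‖u p - v p‖ ^ 2) ν)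
    (hcross : ∫ p, (⟪u p - v p, v p - z p⟫ : ℝ) ∂ν = 0) :
    ∫ p, ‖v p - z p‖ ^ 2 ∂ν ≤ ∫ p, ‖u p - z p‖ ^ 2 ∂ν := by
  have hD : Integrable (fun p => ‖u p - v p‖ ^ 2) ν := by
    apply Integrable.mono' ((hIa.const_mul 2).add (hIb.const_mul 2)) hDm
    filter_upwards with p
    simp only [Pi.add_apply]
    rw [Real.norm_eq_abs, abs_of_nonneg (by positivity)]
    have h1 : ‖u p - v p‖ ≤ ‖u p - z p‖ + ‖v p - z p‖ := by
      have h : u p - v p = (u p - z p) - (v p - z p) := by abel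
      rw [h]; exact norm_sub_le _ _
    nlinarith [norm_nonneg (u p - v p), norm_nonneg (u p - z p), norm_nonneg (v p - z p),
      mul_self_le_mul_self (norm_nonneg (u p - v p)) h1,
      sq_nonneg (‖u p - z p‖ - ‖v p - z p‖)]
  have hpt : ∀ p, ‖u p - z p‖ ^ 2
      = ‖u p - v p‖ ^ 2 + (2 * (⟪u p - v p, v p - z p⟫ : ℝ) + ‖v p - z p‖ ^ 2) := by
    intro p
    have h : u p - z p = (u p - v p) + (v p - z p) := by abel
    rw [h, norm_add_sq_real]
    ring
  have hsum : ∫ p, ‖u p - z p‖ ^ 2 ∂ν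
      = (∫ p, ‖u p - v p‖ ^ 2 ∂ν)
        + (2 * ∫ p, (⟪u p - v p, v p - z p⟫ : ℝ) ∂ν + ∫ p, ‖v p - z p‖ ^ 2 ∂ν) := by
    calc ∫ p, ‖u p - z p‖ ^ 2 ∂ν
        = ∫ p, (‖u p - v p‖ ^ 2 + (2 * (⟪u p - v p, v p - z p⟫ : ℝ) + ‖v p - z p‖ ^ 2)) ∂ν :=
          integral_congr_ae (Filter.Eventually.of_forall hpt)
      _ = (∫ p, ‖u p - v p‖ ^ 2 ∂ν)
          + ∫ p, (2 * (⟪u p - v p, v p - z p⟫ : ℝ) + ‖v p - z p‖ ^ 2) ∂ν :=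
          integral_add hD ((hP.const_mul 2).add hIb)
      _ = (∫ p, ‖u p - v p‖ ^ 2 ∂ν)
          + ((∫ p, 2 * (⟪u p - v p, v p - z p⟫ : ℝ) ∂ν) + ∫ p, ‖v p - z p‖ ^ 2 ∂ν) := by
          rw [integral_add (hP.const_mul 2) hIb]
      _ = (∫ p, ‖u p - v p‖ ^ 2 ∂ν)
          + (2 * ∫ p, (⟪u p - v p, v p - z p⟫ : ℝ) ∂ν + ∫ p, ‖v p - z p‖ ^ 2 ∂ν) := by
          rw [integral_const_mul]
  have hDnn : 0 ≤ ∫ p, ‖u p - v p‖ ^ 2 ∂ν :=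
    integral_nonneg fun p => by positivity
  rw [hsum, hcross]
  linarith

lemma pointwise_le {t : ℝ} (ht : t ∈ Ioo (0:ℝ) 1) (F : Ed d → Ed d) (hF : Continuous F)
    (hV : Continuous (idealVel μ t))
    (hfin : (∫⁻ p : Ed d × Ed d, ENNReal.ofReal
        (‖idealVel μ t ((1 - t) • p.1 + t • p.2) - (p.2 - p.1)‖ ^ 2)
        ∂((stdGaussian d).prod μ)) < ⊤) :
    (∫⁻ p : Ed d × Ed d, ENNReal.ofReal
        (‖idealVel μ t ((1 - t) • p.1 + t • p.2) - (p.2 - p.1)‖ ^ 2)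
        ∂((stdGaussian d).prod μ))
      ≤ ∫⁻ p : Ed d × Ed d, ENNReal.ofReal
        (‖F ((1 - t) • p.1 + t • p.2) - (p.2 - p.1)‖ ^ 2)
        ∂((stdGaussian d).prod μ) := by
  by_cases htop : (∫⁻ p : Ed d × Ed d, ENNReal.ofReal
      (‖F ((1 - t) • p.1 + t • p.2) - (p.2 - p.1)‖ ^ 2) ∂((stdGaussian d).prod μ)) = ⊤
  · rw [htop]; exact le_top
  have hXc : Continuous (fun p : Ed d × Ed d => (1 - t) • p.1 + t • p.2) := by fun_prop
  have hZc : Continuous (fun p : Ed d × Ed d => p.2 - p.1) := by fun_prop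
  have huc : Continuous (fun p : Ed d × Ed d => F ((1 - t) • p.1 + t • p.2)) := hF.comp hXc
  have hvc : Continuous (fun p : Ed d × Ed d => idealVel μ t ((1 - t) • p.1 + t • p.2)) :=
    hV.comp hXc
  have hac : Continuous (fun p : Ed d × Ed d =>
      ‖F ((1 - t) • p.1 + t • p.2) - (p.2 - p.1)‖ ^ 2) := ((huc.sub hZc).norm.pow 2)
  have hbc : Continuous (fun p : Ed d × Ed d =>
      ‖idealVel μ t ((1 - t) • p.1 + t • p.2) - (p.2 - p.1)‖ ^ 2) := ((hvc.sub hZc).norm.pow 2)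
  have hIa : Integrable (fun p : Ed d × Ed d =>
      ‖F ((1 - t) • p.1 + t • p.2) - (p.2 - p.1)‖ ^ 2) ((stdGaussian d).prod μ) := by
    refine ⟨hac.aestronglyMeasurable, ?_⟩
    rw [hasFiniteIntegral_iff_ofReal (Filter.Eventually.of_forall fun p => by positivity)]
    exact lt_top_iff_ne_top.2 htop
  have hIb : Integrable (fun p : Ed d × Ed d =>
      ‖idealVel μ t ((1 - t) • p.1 + t • p.2) - (p.2 - p.1)‖ ^ 2) ((stdGaussian d).prod μ) := by
    refine ⟨hbc.aestronglyMeasurable, ?_⟩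
    rw [hasFiniteIntegral_iff_ofReal (Filter.Eventually.of_forall fun p => by positivity)]
    exact hfin
  have hP : Integrable (fun p : Ed d × Ed d =>
      (⟪F ((1 - t) • p.1 + t • p.2) - idealVel μ t ((1 - t) • p.1 + t • p.2),
        idealVel μ t ((1 - t) • p.1 + t • p.2) - (p.2 - p.1)⟫ : ℝ)) ((stdGaussian d).prod μ) := by
    apply Integrable.mono' (hIa.add (hIb.const_mul 2))
    · exact ((huc.sub hvc).inner (hvc.sub hZc)).aestronglyMeasurable
    · filter_upwards with p
      rw [Real.norm_eq_abs]
      have h1 := abs_real_inner_le_norm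
        (F ((1 - t) • p.1 + t • p.2) - idealVel μ t ((1 - t) • p.1 + t • p.2))
        (idealVel μ t ((1 - t) • p.1 + t • p.2) - (p.2 - p.1))
      have h2 : ‖F ((1 - t) • p.1 + t • p.2) - idealVel μ t ((1 - t) • p.1 + t • p.2)‖
          ≤ ‖F ((1 - t) • p.1 + t • p.2) - (p.2 - p.1)‖
            + ‖idealVel μ t ((1 - t) • p.1 + t • p.2) - (p.2 - p.1)‖ := by
        have h : F ((1 - t) • p.1 + t • p.2) - idealVel μ t ((1 - t) • p.1 + t • p.2)
            = (F ((1 - t) • p.1 + t • p.2) - (p.2 - p.1))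
              - (idealVel μ t ((1 - t) • p.1 + t • p.2) - (p.2 - p.1)) := by abel
        rw [h]; exact norm_sub_le _ _
      simp only [Pi.add_apply]
      have h3 := h1.trans (mul_le_mul_of_nonneg_right h2
        (norm_nonneg (idealVel μ t ((1 - t) • p.1 + t • p.2) - (p.2 - p.1))))
      nlinarith [h3, sq_nonneg (‖F ((1 - t) • p.1 + t • p.2) - (p.2 - p.1)‖
          - ‖idealVel μ t ((1 - t) • p.1 + t • p.2) - (p.2 - p.1)‖),
        norm_nonneg (F ((1 - t) • p.1 + t • p.2) - (p.2 - p.1)),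
        norm_nonneg (idealVel μ t ((1 - t) • p.1 + t • p.2) - (p.2 - p.1))]
  have hcross : ∫ p : Ed d × Ed d,
      (⟪F ((1 - t) • p.1 + t • p.2) - idealVel μ t ((1 - t) • p.1 + t • p.2),
        idealVel μ t ((1 - t) • p.1 + t • p.2) - (p.2 - p.1)⟫ : ℝ)
      ∂((stdGaussian d).prod μ) = 0 :=
    cross_zero μ ht (fun x => F x - idealVel μ t x) (hF.sub hV) hV hP
  have hmain := l2_min ((stdGaussian d).prod μ)
    (fun p : Ed d × Ed d => F ((1 - t) • p.1 + t • p.2))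
    (fun p : Ed d × Ed d => idealVel μ t ((1 - t) • p.1 + t • p.2))
    (fun p : Ed d × Ed d => p.2 - p.1) hIa hIb hP
    ((huc.sub hvc).norm.pow 2).aestronglyMeasurable hcross
  calc (∫⁻ p : Ed d × Ed d, ENNReal.ofReal
        (‖idealVel μ t ((1 - t) • p.1 + t • p.2) - (p.2 - p.1)‖ ^ 2)
        ∂((stdGaussian d).prod μ))
      = ENNReal.ofReal (∫ p : Ed d × Ed d,
          ‖idealVel μ t ((1 - t) • p.1 + t • p.2) - (p.2 - p.1)‖ ^ 2
          ∂((stdGaussian d).prod μ)) :=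
        (ofReal_integral_eq_lintegral_ofReal hIb
          (Filter.Eventually.of_forall fun p => by positivity)).symm
    _ ≤ ENNReal.ofReal (∫ p : Ed d × Ed d,
          ‖F ((1 - t) • p.1 + t • p.2) - (p.2 - p.1)‖ ^ 2
          ∂((stdGaussian d).prod μ)) := ENNReal.ofReal_le_ofReal hmain
    _ = ∫⁻ p : Ed d × Ed d, ENNReal.ofReal
          (‖F ((1 - t) • p.1 + t • p.2) - (p.2 - p.1)‖ ^ 2) ∂((stdGaussian d).prod μ) :=
        ofReal_integral_eq_lintegral_ofReal hIa
          (Filter.Eventually.of_forall fun p => by positivity)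

lemma FM_min
    (hc : ContinuousOn (fun p : ℝ × Ed d => idealVel μ p.1 p.2)
      (Ioo (0 : ℝ) 1 ×ˢ (univ : Set (Ed d))))
    (hfin : FMLoss μ (idealVel μ) < ⊤)
    (f : ℝ → Ed d → Ed d)
    (hcf : ContinuousOn (fun p : ℝ × Ed d => f p.1 p.2)
      (Ioo (0 : ℝ) 1 ×ˢ (univ : Set (Ed d)))) :
    FMLoss μ (idealVel μ) ≤ FMLoss μ f := by
  rw [FMLoss, FMLoss]
  have hmeas : Measurable (fun t : ℝ => ∫⁻ p : Ed d × Ed d, ENNReal.ofReal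
      (‖idealVel μ t ((1 - t) • p.1 + t • p.2) - (p.2 - p.1)‖ ^ 2)
      ∂((stdGaussian d).prod μ)) := by
    apply Measurable.lintegral_prod_right'
      (f := fun q : ℝ × (Ed d × Ed d) => ENNReal.ofReal
        (‖idealVel μ q.1 ((1 - q.1) • q.2.1 + q.1 • q.2.2) - (q.2.2 - q.2.1)‖ ^ 2))
    apply ENNReal.measurable_ofReal.comp
    apply Measurable.pow_const
    apply Measurable.norm
    apply Measurable.sub
    · exact (meas_idealVel μ).comp
        ((measurable_fst).prodMk
          (((measurable_const.sub measurable_fst).smul (measurable_snd.fst)).add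
            (measurable_fst.smul measurable_snd.snd)))
    · exact measurable_snd.snd.sub measurable_snd.fst
  have hae : ∀ᵐ t ∂(volume.restrict (Ioo (0:ℝ) 1)),
      (∫⁻ p : Ed d × Ed d, ENNReal.ofReal
        (‖idealVel μ t ((1 - t) • p.1 + t • p.2) - (p.2 - p.1)‖ ^ 2)
        ∂((stdGaussian d).prod μ)) < ⊤ :=
    ae_lt_top hmeas (by rw [FMLoss] at hfin; exact hfin.ne)
  apply lintegral_mono_ae
  filter_upwards [hae, ae_restrict_mem measurableSet_Ioo] with t hlt ht
  have hF : Continuous (f t) := by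
    have := hcf.comp_continuous (continuous_const.prodMk continuous_id : Continuous fun x : Ed d => (t, x))
      (fun x => ⟨ht, mem_univ x⟩)
    exact this
  have hV : Continuous (idealVel μ t) := by
    have := hc.comp_continuous (continuous_const.prodMk continuous_id : Continuous fun x : Ed d => (t, x))
      (fun x => ⟨ht, mem_univ x⟩)
    exact this
  exact pointwise_le μ ht (f t) hF hV hlt

/-- The pair of ideal conditional and unconditional velocity fields is a global
minimizer of the classifier-free-guidance training functional
`L^cfg(f,g) := q·L_{μ_y}(f) + (1-q)·L_{μ_∅}(g)` over pairs of continuous velocity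
fields. -/
theorem stmt1 {d : ℕ} (hd : 1 ≤ d)
    (μy μe : Measure (EuclideanSpace ℝ (Fin d)))
    [IsProbabilityMeasure μy] [IsProbabilityMeasure μe]
    (hsuppy : IsCompact (mSupport μy)) (hsuppe : IsCompact (mSupport μe))
    (q : ℝ) (hq : q ∈ Ioo (0 : ℝ) 1)
    (hcy : ContinuousOn (fun p : ℝ × EuclideanSpace ℝ (Fin d) => idealVel μy p.1 p.2)
      (Ioo (0 : ℝ) 1 ×ˢ (univ : Set (EuclideanSpace ℝ (Fin d)))))
    (hce : ContinuousOn (fun p : ℝ × EuclideanSpace ℝ (Fin d) => idealVel μe p.1 p.2)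
      (Ioo (0 : ℝ) 1 ×ˢ (univ : Set (EuclideanSpace ℝ (Fin d)))))
    (hfy : FMLoss μy (idealVel μy) < ⊤) (hfe : FMLoss μe (idealVel μe) < ⊤) :
    ∀ f g : ℝ → EuclideanSpace ℝ (Fin d) → EuclideanSpace ℝ (Fin d),
      ContinuousOn (fun p : ℝ × EuclideanSpace ℝ (Fin d) => f p.1 p.2)
        (Ioo (0 : ℝ) 1 ×ˢ (univ : Set (EuclideanSpace ℝ (Fin d)))) →
      ContinuousOn (fun p : ℝ × EuclideanSpace ℝ (Fin d) => g p.1 p.2)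
        (Ioo (0 : ℝ) 1 ×ˢ (univ : Set (EuclideanSpace ℝ (Fin d)))) →
      ENNReal.ofReal q * FMLoss μy (idealVel μy)
          + ENNReal.ofReal (1 - q) * FMLoss μe (idealVel μe)
        ≤ ENNReal.ofReal q * FMLoss μy f + ENNReal.ofReal (1 - q) * FMLoss μe g := by
  intro f g hcf hcg
  exact add_le_add
    (mul_le_mul_right (FM_min μy hcy hfy f hcf) _)
    (mul_le_mul_right (FM_min μe hce hfe g hcg) _)
end
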